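/- arXiv:math/0508252 — 3 statements merged into one kernel-verified Lean document; each statement's English description precedes it below -/
import Mathlib

section
/- Let E be a real inner product space, let e₁, e₂ ∈ E be orthonormal, let k ≥ 2 be an integer, and for 0 ≤ j < k let R_j : E → E be the linear isometry fixing the orthogonal complement of span{e₁,e₂} pointwise and acting on span{e₁,e₂} by R_j e₁ = cos(2πj/k) e₁ + sin(2πj/k) e₂ and R_j e₂ = −sin(2πj/k) e₁ + cos(2πj/k) e₂ (the rotation of angle 2πj/k about the plane P = span{e₁,e₂}^⊥). Let m ≥ 1 and let w be an alternating m-form on E of the shape w = e₁♭ ∧ φ + e₂♭ ∧ ψ, where φ and ψ are alternating (m−1)-forms on E that vanish whenever one of their arguments lies in span{e₁,e₂}; explicitly, assume that for all v₁,…,v_m ∈ E, w(v₁,…,v_m) = ∑_{i=1}^{m} (−1)^{i−1} [ ⟨v_i, e₁⟩ · φ(v₁,…,v̂_i,…,v_m) + ⟨v_i, e₂⟩ · ψ(v₁,…,v̂_i,…,v_m) ], where v̂_i denotes omission of the i-th argument. Then the pullbacks w_j = R_j^* w (defined by (R_j^*w)(v₁,…,v_m) = w(R_j v₁,…,R_j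 v_m)) have vanishing sum: ∑_{j=0}^{k-1} w(R_j v₁, …, R_j v_m) = 0 for all v₁,…,v_m ∈ E. -/
/-!
Every `R_j` moves vectors only inside `span {e₁, e₂}`, where `φ` and `ψ` vanish, so `φ` and `ψ`
are `R_j`-invariant, while `R_j^*` rotates the pair `(e₁♭, e₂♭)` by `θ_j = 2πj/k`. Hence
`R_j^* w = cos θ_j • w + sin θ_j • (e₁♭ ∧ ψ - e₂♭ ∧ φ)`, and both `∑ cos θ_j` and `∑ sin θ_j`
vanish, being the real and imaginary parts of the sum of the `k`-th roots of unity.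
-/

open scoped BigOperators RealInnerProductSpace

theorem AlternatingMap.map_eq_of_forall_sub_mem {R M N ι : Type*} [CommSemiring R]
    [AddCommGroup M] [Module R M] [AddCommMonoid N] [Module R N] [Fintype ι] [DecidableEq ι]
    (f : M [⋀^ι]→ₗ[R] N) {S : Submodule R M} (hf : ∀ x i, x i ∈ S → f x = 0)
    {x y : ι → M} (hxy : ∀ i, y i - x i ∈ S) : f y = f x := by
  have hy : y = x + (y - x) := (add_sub_cancel x y).symm
  rw [hy, f.map_add_univ, Finset.sum_eq_single Finset.univ]
  · rw [Finset.piecewise_univ]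
  · intro s _ hs
    obtain ⟨i, -, hi⟩ := Finset.exists_of_ssubset (Finset.ssubset_univ_iff.2 hs)
    exact hf _ i (by simpa [Finset.piecewise_eq_of_notMem _ _ _ hi] using hxy i)
  · simp

section PlaneRotation

variable {E : Type*} [NormedAddCommGroup E] [InnerProductSpace ℝ E]
  {F : Type*} [FunLike F E E] [LinearMapClass F ℝ E E]

structure IsPlaneRotation (e₁ e₂ : E) (c s : ℝ) (T : F) : Prop where
  map_left : T e₁ = c • e₁ + s • e₂
  map_right : T e₂ = (-s) • e₁ + c • e₂
  map_of_orthogonal : ∀ x, ⟪x, e₁⟫ = 0 → ⟪x, e₂⟫ = 0 → T x = x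

namespace IsPlaneRotation

variable {e₁ e₂ : E} {c s : ℝ} {T : F}

theorem apply_eq (hT : IsPlaneRotation e₁ e₂ c s T)
    (he₁ : ‖e₁‖ = 1) (he₂ : ‖e₂‖ = 1) (he : ⟪e₁, e₂⟫ = 0) (v : E) :
    T v = v + ((c - 1) * ⟪v, e₁⟫ - s * ⟪v, e₂⟫) • e₁
      + (s * ⟪v, e₁⟫ + (c - 1) * ⟪v, e₂⟫) • e₂ := by
  have he₂₁ : ⟪e₂, e₁⟫ = 0 := by rw [real_inner_comm, he]
  set p := v - ⟪v, e₁⟫ • e₁ - ⟪v, e₂⟫ • e₂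
  have hp : T p = p := hT.map_of_orthogonal p
    (by simp [p, inner_sub_left, real_inner_smul_left, he₁, he₂₁])
    (by simp [p, inner_sub_left, real_inner_smul_left, he₂, he])
  have hv : v = p + ⟪v, e₁⟫ • e₁ + ⟪v, e₂⟫ • e₂ := by
    simp only [p]; abel
  conv_lhs => rw [hv, map_add, map_add, map_smul, map_smul, hp, hT.map_left, hT.map_right]
  module

theorem apply_sub_self_mem_span (hT : IsPlaneRotation e₁ e₂ c s T)
    (he₁ : ‖e₁‖ = 1) (he₂ : ‖e₂‖ = 1) (he : ⟪e₁, e₂⟫ = 0) (v : E) :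
    T v - v ∈ Submodule.span ℝ {e₁, e₂} :=
  Submodule.mem_span_pair.2 ⟨_, _, by rw [hT.apply_eq he₁ he₂ he, add_assoc, add_sub_cancel_left]⟩

theorem inner_apply_left (hT : IsPlaneRotation e₁ e₂ c s T)
    (he₁ : ‖e₁‖ = 1) (he₂ : ‖e₂‖ = 1) (he : ⟪e₁, e₂⟫ = 0) (v : E) :
    ⟪T v, e₁⟫ = c * ⟪v, e₁⟫ - s * ⟪v, e₂⟫ := by
  have he₂₁ : ⟪e₂, e₁⟫ = 0 := by rw [real_inner_comm, he]
  rw [hT.apply_eq he₁ he₂ he]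
  simp only [inner_add_left, real_inner_smul_left, real_inner_self_eq_norm_sq, he₁, he₂₁]
  ring

theorem inner_apply_right (hT : IsPlaneRotation e₁ e₂ c s T)
    (he₁ : ‖e₁‖ = 1) (he₂ : ‖e₂‖ = 1) (he : ⟪e₁, e₂⟫ = 0) (v : E) :
    ⟪T v, e₂⟫ = s * ⟪v, e₁⟫ + c * ⟪v, e₂⟫ := by
  rw [hT.apply_eq he₁ he₂ he]
  simp only [inner_add_left, real_inner_smul_left, real_inner_self_eq_norm_sq, he₂, he]
  ring

end IsPlaneRotation

end PlaneRotation

section PairWedge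

variable {E : Type*} [NormedAddCommGroup E] [InnerProductSpace ℝ E] {m : ℕ}

/-- The form `e₁♭ ∧ φ + e₂♭ ∧ ψ`, written out through its Laplace expansion. -/
def pairWedge (e₁ e₂ : E) (φ ψ : E [⋀^Fin m]→ₗ[ℝ] ℝ) (x : Fin (m + 1) → E) : ℝ :=
  ∑ i : Fin (m + 1), (-1 : ℝ) ^ (i : ℕ) *
    (⟪x i, e₁⟫ * φ (i.removeNth x) + ⟪x i, e₂⟫ * ψ (i.removeNth x))

theorem IsPlaneRotation.pairWedge_comp {F : Type*} [FunLike F E E] [LinearMapClass F ℝ E E]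
    {e₁ e₂ : E} {c s : ℝ} {T : F} (hT : IsPlaneRotation e₁ e₂ c s T)
    (he₁ : ‖e₁‖ = 1) (he₂ : ‖e₂‖ = 1) (he : ⟪e₁, e₂⟫ = 0) {φ ψ : E [⋀^Fin m]→ₗ[ℝ] ℝ}
    (hφ : ∀ x i, x i ∈ Submodule.span ℝ {e₁, e₂} → φ x = 0)
    (hψ : ∀ x i, x i ∈ Submodule.span ℝ {e₁, e₂} → ψ x = 0) (x : Fin (m + 1) → E) :
    pairWedge e₁ e₂ φ ψ (fun i => T (x i))
      = c * pairWedge e₁ e₂ φ ψ x + s * pairWedge e₁ e₂ ψ (-φ) x := by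
  have hremove : ∀ χ : E [⋀^Fin m]→ₗ[ℝ] ℝ,
      (∀ x i, x i ∈ Submodule.span ℝ {e₁, e₂} → χ x = 0) →
      ∀ i : Fin (m + 1), χ (i.removeNth fun l => T (x l)) = χ (i.removeNth x) :=
    fun χ hχ i => χ.map_eq_of_forall_sub_mem hχ fun l =>
      hT.apply_sub_self_mem_span he₁ he₂ he (x (i.succAbove l))
  simp only [pairWedge, Finset.mul_sum, ← Finset.sum_add_distrib]
  refine Finset.sum_congr rfl fun i _ => ?_
  rw [hT.inner_apply_left he₁ he₂ he, hT.inner_apply_right he₁ he₂ he, hremove φ hφ,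
    hremove ψ hψ, AlternatingMap.neg_apply]
  ring

end PairWedge

theorem sum_exp_two_pi_mul_I_div_eq_zero {k : ℕ} (hk : 2 ≤ k) :
    ∑ j ∈ Finset.range k, Complex.exp (↑(2 * Real.pi * j / k) * Complex.I) = 0 := by
  have hζ := Complex.isPrimitiveRoot_exp k (by omega)
  rw [← hζ.geom_sum_eq_zero (by omega)]
  refine Finset.sum_congr rfl fun j _ => ?_
  rw [← Complex.exp_nat_mul]
  push_cast
  ring_nf

theorem sum_cos_two_pi_mul_div_eq_zero {k : ℕ} (hk : 2 ≤ k) :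
    ∑ j ∈ Finset.range k, Real.cos (2 * Real.pi * j / k) = 0 := by
  simpa only [Complex.re_sum, Complex.exp_ofReal_mul_I_re, Complex.zero_re] using
    congrArg Complex.re (sum_exp_two_pi_mul_I_div_eq_zero hk)

theorem sum_sin_two_pi_mul_div_eq_zero {k : ℕ} (hk : 2 ≤ k) :
    ∑ j ∈ Finset.range k, Real.sin (2 * Real.pi * j / k) = 0 := by
  simpa only [Complex.im_sum, Complex.exp_ofReal_mul_I_im, Complex.zero_im] using
    congrArg Complex.im (sum_exp_two_pi_mul_I_div_eq_zero hk)

/-- Rotated calibrations of the shape `w = e₁♭ ∧ φ + e₂♭ ∧ ψ` have vanishing sum. -/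
theorem stmt1 {E : Type*} [NormedAddCommGroup E] [InnerProductSpace ℝ E]
    (e₁ e₂ : E) (he₁ : ‖e₁‖ = 1) (he₂ : ‖e₂‖ = 1) (he : ⟪e₁, e₂⟫ = 0)
    (k : ℕ) (hk : 2 ≤ k) (R : ℕ → E →ₗᵢ[ℝ] E)
    (hR₁ : ∀ j, R j e₁ =
      Real.cos (2 * Real.pi * j / k) • e₁ + Real.sin (2 * Real.pi * j / k) • e₂)
    (hR₂ : ∀ j, R j e₂ =
      (-Real.sin (2 * Real.pi * j / k)) • e₁ + Real.cos (2 * Real.pi * j / k) • e₂)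
    (hRfix : ∀ (j : ℕ) (x : E), ⟪x, e₁⟫ = 0 → ⟪x, e₂⟫ = 0 → R j x = x)
    (m : ℕ)
    (w : E [⋀^Fin (m + 1)]→ₗ[ℝ] ℝ) (φ ψ : E [⋀^Fin m]→ₗ[ℝ] ℝ)
    (hφ : ∀ (x : Fin m → E) (i : Fin m) (c₁ c₂ : ℝ), x i = c₁ • e₁ + c₂ • e₂ → φ x = 0)
    (hψ : ∀ (x : Fin m → E) (i : Fin m) (c₁ c₂ : ℝ), x i = c₁ • e₁ + c₂ • e₂ → ψ x = 0)
    (hw : ∀ x : Fin (m + 1) → E,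
      w x = ∑ i : Fin (m + 1), (-1 : ℝ) ^ (i : ℕ) *
        (⟪x i, e₁⟫ * φ (i.removeNth x) + ⟪x i, e₂⟫ * ψ (i.removeNth x))) :
    ∀ x : Fin (m + 1) → E, ∑ j ∈ Finset.range k, w (fun i => R j (x i)) = 0 := by
  intro x
  have hspan : ∀ χ : E [⋀^Fin m]→ₗ[ℝ] ℝ,
      (∀ (x : Fin m → E) (i : Fin m) (c₁ c₂ : ℝ), x i = c₁ • e₁ + c₂ • e₂ → χ x = 0) →
      ∀ x i, x i ∈ Submodule.span ℝ {e₁, e₂} → χ x = 0 := fun χ hχ x i hx =>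
    let ⟨c₁, c₂, h⟩ := Submodule.mem_span_pair.1 hx
    hχ x i c₁ c₂ h.symm
  have hrot : ∀ j : ℕ, IsPlaneRotation e₁ e₂
      (Real.cos (2 * Real.pi * j / k)) (Real.sin (2 * Real.pi * j / k)) (R j) :=
    fun j => ⟨hR₁ j, hR₂ j, hRfix j⟩
  have hw' : ⇑w = pairWedge e₁ e₂ φ ψ := funext hw
  simp only [hw', fun j => (hrot j).pairWedge_comp he₁ he₂ he
    (hspan φ hφ) (hspan ψ hψ) x]
  rw [Finset.sum_add_distrib, ← Finset.sum_mul, ← Finset.sum_mul,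
    sum_cos_two_pi_mul_div_eq_zero hk, sum_sin_two_pi_mul_div_eq_zero hk]
  ring
end

section
/- Let G : ℝ³ → ℂ³ be the parametrization of the normal bundle of the catenoid in ℂ³ = ℝ³ ⊕ iℝ³ given by G(u, v, w) = (u + i·w cosh u sinh u, cosh u cos v − i·w cosh u cos v, cosh u sin v − i·w cosh u sin v). Then for all (u, v, w), Re( Ω(∂G/∂u, ∂G/∂v, ∂G/∂w) ) = 0, where Ω is the determinant 3-form on ℂ³; i.e. the complex determinant of the three partial derivatives of G is purely imaginary, so the normal bundle of the catenoid is special Lagrangian with phase i = i^{3−2}, an instance of the Harvey–Lawson theorem that the normal bundle of an austere m-submanifold of ℝⁿ is special Lagrangian in ℂⁿ with phase i^{n−m}. -/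
noncomputable def G (u v w : ℝ) : Fin 3 → ℂ :=
  ![(u : ℂ) + (w * (Real.cosh u * Real.sinh u) : ℝ) * Complex.I,
    ((Real.cosh u * Real.cos v : ℝ) : ℂ) - (w * (Real.cosh u * Real.cos v) : ℝ) * Complex.I,
    ((Real.cosh u * Real.sin v : ℝ) : ℂ) - (w * (Real.cosh u * Real.sin v) : ℝ) * Complex.I]

noncomputable def Gu (u v w : ℝ) : Fin 3 → ℂ := fun i => deriv (fun s => G s v w i) u

noncomputable def Gv (u v w : ℝ) : Fin 3 → ℂ := fun i => deriv (fun s => G u s w i) v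

noncomputable def Gw (u v w : ℝ) : Fin 3 → ℂ := fun i => deriv (fun s => G u v s i) w

noncomputable def detForm3 (v : Fin 3 → Fin 3 → ℂ) : ℂ :=
  Matrix.det (Matrix.of fun i j => v j i)

/-! Write the catenoid as `X(u, v)` and `ν = X_u × X_v`, so that `G = X + i w ν`. By
multilinearity of `Ω`, the real part of `Ω(G_u, G_v, G_w) = Ω(X_u + i w ν_u, X_v + i w ν_v, i ν)`
collects exactly the terms with two factors of `i`, namely `-w (det(ν_u, X_v, ν) + det(X_u, ν_v, ν))`.
The bracket is `-2H|ν|³`, where `H` is the mean curvature, so it vanishes because the catenoid is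
minimal. -/

open Real

noncomputable def complexify {ι : Type*} (x y : ι → ℝ) : ι → ℂ :=
  fun i => x i + y i * Complex.I

theorem hasDerivAt_complexify {ι : Type*} {x y : ℝ → ι → ℝ} {x' y' : ι → ℝ} {t : ℝ}
    (hx : ∀ i, HasDerivAt (fun s => x s i) (x' i) t)
    (hy : ∀ i, HasDerivAt (fun s => y s i) (y' i) t) (i : ι) :
    HasDerivAt (fun s => complexify (x s) (y s) i) (complexify x' y' i) t :=
  (hx i).ofReal_comp.add ((hy i).ofReal_comp.mul_const Complex.I)

theorem re_detForm3_complexify (a b c d n : Fin 3 → ℝ) (w : ℝ) :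
    (detForm3 ![complexify a (w • c), complexify b (w • d), complexify 0 n]).re =
      -w * ((Matrix.of ![c, b, n]).det + (Matrix.of ![a, d, n]).det) := by
  simp only [detForm3, complexify, Matrix.det_fin_three, Matrix.of_apply, Matrix.cons_val_zero,
    Matrix.cons_val_one, Matrix.cons_val, Pi.smul_apply, Pi.zero_apply, smul_eq_mul, Complex.add_re,
    Complex.sub_re, Complex.mul_re, Complex.mul_im, Complex.add_im, Complex.ofReal_re,
    Complex.ofReal_im, Complex.I_re, Complex.I_im]
  ring

noncomputable def catenoid (u v : ℝ) : Fin 3 → ℝ := ![u, cosh u * cos v, cosh u * sin v]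

noncomputable def catenoidNormal (u v : ℝ) : Fin 3 → ℝ :=
  ![cosh u * sinh u, -(cosh u * cos v), -(cosh u * sin v)]

theorem G_eq_complexify (u v w : ℝ) :
    G u v w = complexify (catenoid u v) (w • catenoidNormal u v) := by
  funext i
  fin_cases i <;>
    simp only [G, complexify, catenoid, catenoidNormal, Pi.smul_apply, smul_eq_mul, Fin.zero_eta,
      Fin.mk_one, Fin.reduceFinMk, Matrix.cons_val_zero, Matrix.cons_val_one, Matrix.cons_val] <;>
    push_cast <;> ring

theorem hasDerivAt_catenoid_u (u v : ℝ) (i : Fin 3) :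
    HasDerivAt (fun s => catenoid s v i) (![1, sinh u * cos v, sinh u * sin v] i) u := by
  fin_cases i <;> simp only [catenoid, Fin.zero_eta, Fin.mk_one, Fin.reduceFinMk,
    Matrix.cons_val_zero, Matrix.cons_val_one, Matrix.cons_val]
  · exact hasDerivAt_id u
  · exact (hasDerivAt_cosh u).mul_const _
  · exact (hasDerivAt_cosh u).mul_const _

theorem hasDerivAt_catenoid_v (u v : ℝ) (i : Fin 3) :
    HasDerivAt (fun s => catenoid u s i) (![0, -(cosh u * sin v), cosh u * cos v] i) v := by
  fin_cases i <;> simp only [catenoid, Fin.zero_eta, Fin.mk_one, Fin.reduceFinMk,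
    Matrix.cons_val_zero, Matrix.cons_val_one, Matrix.cons_val]
  · exact hasDerivAt_const v u
  · simpa using (hasDerivAt_cos v).const_mul (cosh u)
  · exact (hasDerivAt_sin v).const_mul (cosh u)

theorem hasDerivAt_catenoidNormal_u (u v : ℝ) (i : Fin 3) :
    HasDerivAt (fun s => catenoidNormal s v i)
      (![cosh u ^ 2 + sinh u ^ 2, -(sinh u * cos v), -(sinh u * sin v)] i) u := by
  fin_cases i <;> simp only [catenoidNormal, Fin.zero_eta, Fin.mk_one, Fin.reduceFinMk,
    Matrix.cons_val_zero, Matrix.cons_val_one, Matrix.cons_val]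
  · exact ((hasDerivAt_cosh u).mul (hasDerivAt_sinh u)).congr_deriv (by ring)
  · exact ((hasDerivAt_cosh u).mul_const _).neg
  · exact ((hasDerivAt_cosh u).mul_const _).neg

theorem hasDerivAt_catenoidNormal_v (u v : ℝ) (i : Fin 3) :
    HasDerivAt (fun s => catenoidNormal u s i) (![0, cosh u * sin v, -(cosh u * cos v)] i) v := by
  fin_cases i <;> simp only [catenoidNormal, Fin.zero_eta, Fin.mk_one, Fin.reduceFinMk,
    Matrix.cons_val_zero, Matrix.cons_val_one, Matrix.cons_val]
  · exact hasDerivAt_const v _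
  · exact ((hasDerivAt_cos v).const_mul (cosh u)).neg.congr_deriv (by ring)
  · exact ((hasDerivAt_sin v).const_mul (cosh u)).neg

theorem Gu_eq (u v w : ℝ) :
    Gu u v w = complexify ![1, sinh u * cos v, sinh u * sin v]
      (w • ![cosh u ^ 2 + sinh u ^ 2, -(sinh u * cos v), -(sinh u * sin v)]) := by
  funext i
  simp only [Gu, G_eq_complexify]
  exact (hasDerivAt_complexify (hasDerivAt_catenoid_u u v)
    (fun j => (hasDerivAt_catenoidNormal_u u v j).const_mul w) i).deriv

theorem Gv_eq (u v w : ℝ) :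
    Gv u v w = complexify ![0, -(cosh u * sin v), cosh u * cos v]
      (w • ![0, cosh u * sin v, -(cosh u * cos v)]) := by
  funext i
  simp only [Gv, G_eq_complexify]
  exact (hasDerivAt_complexify (hasDerivAt_catenoid_v u v)
    (fun j => (hasDerivAt_catenoidNormal_v u v j).const_mul w) i).deriv

theorem Gw_eq (u v w : ℝ) : Gw u v w = complexify 0 (catenoidNormal u v) := by
  funext i
  simp only [Gw, G_eq_complexify]
  exact (hasDerivAt_complexify (fun j => hasDerivAt_const w (catenoid u v j))
    (fun j => hasDerivAt_mul_const (catenoidNormal u v j)) i).deriv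

theorem catenoid_meanCurvature_eq_zero (u v : ℝ) :
    (Matrix.of ![![cosh u ^ 2 + sinh u ^ 2, -(sinh u * cos v), -(sinh u * sin v)],
        ![0, -(cosh u * sin v), cosh u * cos v], catenoidNormal u v]).det +
      (Matrix.of ![![1, sinh u * cos v, sinh u * sin v],
        ![0, cosh u * sin v, -(cosh u * cos v)], catenoidNormal u v]).det = 0 := by
  simp only [catenoidNormal, Matrix.det_fin_three, Matrix.of_apply, Matrix.cons_val_zero,
    Matrix.cons_val_one, Matrix.cons_val]
  linear_combination cosh u ^ 2 * (sin v ^ 2 + cos v ^ 2) * cosh_sq_sub_sinh_sq u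

/-- The normal bundle of the catenoid is special Lagrangian with phase `i`:
the complex determinant of the three partial derivatives of `G` is purely imaginary. -/
theorem stmt7 (u v w : ℝ) :
    (detForm3 ![Gu u v w, Gv u v w, Gw u v w]).re = 0 := by
  rw [Gu_eq, Gv_eq, Gw_eq, re_detForm3_complexify, catenoid_meanCurvature_eq_zero, mul_zero]
end

section
/- Let U ⊆ ℝ² be open and let r : U → ℝ³ be a smooth conformal harmonic immersion, i.e. r_uu + r_vv = 0, ⟨r_u, r_v⟩ = 0, and ‖r_u‖ = ‖r_v‖ ≠ 0 on U (so r parametrizes a minimal, hence austere, surface M in ℝ³). Let n = (r_u × r_v)/‖r_u × r_v‖ be the unit normal and define F : U × ℝ → ℂ³ = ℝ³ ⊕ iℝ³ by F(u, v, t) = r(u, v) + i·t·n(u, v), a parametrization of the normal bundle ν(M). Then at every point of U × ℝ: (i) the standard symplectic form ω((x,y),(x',y')) = ⟨x,y'⟩ − ⟨x',y⟩ vanishes on every pair of partial derivatives of F (ν(M) is Lagrangian), and (ii) Re( Ω(∂F/∂u, ∂F/∂v, ∂F/∂t) ) = 0, where Ω is the determinant 3-form on ℂ³ (ν(M) is special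 Lagrangian with phase i^{3−2} = i). This is the surface case of the Harvey–Lawson theorem that the normal bundle ν(M) ⊂ ℂⁿ of a submanifold M ⊂ ℝⁿ is special Lagrangian with phase i^{n−m} if and only if M is austere. -/
/-- Partial derivative in the first variable of a map `ℝ² → ℝ³`. -/
noncomputable def Du (f : ℝ × ℝ → Fin 3 → ℝ) (p : ℝ × ℝ) : Fin 3 → ℝ :=
  fun i => deriv (fun s => f (s, p.2) i) p.1

/-- Partial derivative in the second variable of a map `ℝ² → ℝ³`. -/
noncomputable def Dv (f : ℝ × ℝ → Fin 3 → ℝ) (p : ℝ × ℝ) : Fin 3 → ℝ :=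
  fun i => deriv (fun s => f (p.1, s) i) p.2

/-- The Euclidean inner product on `ℝ³`. -/
def dot3 (a b : Fin 3 → ℝ) : ℝ := a 0 * b 0 + a 1 * b 1 + a 2 * b 2

/-- The Euclidean norm on `ℝ³`. -/
noncomputable def norm3 (a : Fin 3 → ℝ) : ℝ := Real.sqrt (dot3 a a)

/-- The unit normal `n = (r_u × r_v)/‖r_u × r_v‖` of a parametrized surface. -/
noncomputable def nvec (r : ℝ × ℝ → Fin 3 → ℝ) (p : ℝ × ℝ) : Fin 3 → ℝ :=
  (norm3 (crossProduct (Du r p) (Dv r p)))⁻¹ • crossProduct (Du r p) (Dv r p)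

/-- The parametrization `F(u,v,t) = (r(u,v), t·n(u,v))` of the normal bundle, written
in `ℝ³ ⊕ ℝ³ ≅ ℂ³` (first component the real part, second the imaginary part). -/
noncomputable def nb (r : ℝ × ℝ → Fin 3 → ℝ) (p : ℝ × ℝ) (t : ℝ) :
    (Fin 3 → ℝ) × (Fin 3 → ℝ) :=
  (r p, t • nvec r p)

/-- `∂F/∂u`. -/
noncomputable def nbu (r : ℝ × ℝ → Fin 3 → ℝ) (p : ℝ × ℝ) (t : ℝ) :
    (Fin 3 → ℝ) × (Fin 3 → ℝ) :=
  (fun i => deriv (fun s => (nb r (s, p.2) t).1 i) p.1,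
   fun i => deriv (fun s => (nb r (s, p.2) t).2 i) p.1)

/-- `∂F/∂v`. -/
noncomputable def nbv (r : ℝ × ℝ → Fin 3 → ℝ) (p : ℝ × ℝ) (t : ℝ) :
    (Fin 3 → ℝ) × (Fin 3 → ℝ) :=
  (fun i => deriv (fun s => (nb r (p.1, s) t).1 i) p.2,
   fun i => deriv (fun s => (nb r (p.1, s) t).2 i) p.2)

/-- `∂F/∂t`. -/
noncomputable def nbt (r : ℝ × ℝ → Fin 3 → ℝ) (p : ℝ × ℝ) (t : ℝ) :
    (Fin 3 → ℝ) × (Fin 3 → ℝ) :=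
  (fun i => deriv (fun s => (nb r p s).1 i) t,
   fun i => deriv (fun s => (nb r p s).2 i) t)

/-- The standard symplectic form `ω((x,y),(x',y')) = ⟨x,y'⟩ − ⟨x',y⟩` on `ℝ³ ⊕ ℝ³`. -/
def symp (X Y : (Fin 3 → ℝ) × (Fin 3 → ℝ)) : ℝ := dot3 X.1 Y.2 - dot3 Y.1 X.2

/-- A pair `(x, y) ∈ ℝ³ ⊕ ℝ³` viewed as the vector `x + iy ∈ ℂ³`. -/
noncomputable def toC (X : (Fin 3 → ℝ) × (Fin 3 → ℝ)) : Fin 3 → ℂ :=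
  fun i => (X.1 i : ℂ) + (X.2 i : ℂ) * Complex.I

section auxlemmas

lemma fin3_mk_two (h : 2 < 3) : (⟨2, h⟩ : Fin 3) = 2 := rfl

lemma dot3_self_nonneg (x : Fin 3 → ℝ) : 0 ≤ dot3 x x := by
  unfold dot3; nlinarith [sq_nonneg (x 0), sq_nonneg (x 1), sq_nonneg (x 2)]

lemma dot3_self_eq_sq (x : Fin 3 → ℝ) : dot3 x x = norm3 x ^ 2 := by
  rw [norm3, Real.sq_sqrt (dot3_self_nonneg x)]

lemma lagrange3 (a b : Fin 3 → ℝ) :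
    dot3 (crossProduct a b) (crossProduct a b) = dot3 a a * dot3 b b - dot3 a b ^ 2 := by
  simp [cross_apply, dot3]; ring

lemma dot3_du_nvec (r : ℝ × ℝ → Fin 3 → ℝ) (q : ℝ × ℝ) : dot3 (Du r q) (nvec r q) = 0 := by
  unfold nvec
  simp only [Pi.smul_apply, smul_eq_mul, dot3, cross_apply]
  simp only [Matrix.cons_val_zero, Matrix.cons_val_one, Matrix.head_cons,
    Matrix.cons_val_two, Matrix.tail_cons]
  ring

lemma dot3_dv_nvec (r : ℝ × ℝ → Fin 3 → ℝ) (q : ℝ × ℝ) : dot3 (Dv r q) (nvec r q) = 0 := by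
  unfold nvec
  simp only [Pi.smul_apply, smul_eq_mul, dot3, cross_apply]
  simp only [Matrix.cons_val_zero, Matrix.cons_val_one, Matrix.head_cons,
    Matrix.cons_val_two, Matrix.tail_cons]
  ring

lemma dot3_cross_cyclic (x y z : Fin 3 → ℝ) :
    dot3 x (crossProduct y z) = dot3 y (crossProduct z x) := by
  simp [cross_apply, dot3]; ring

lemma dot3_smul_left3 (t : ℝ) (x y : Fin 3 → ℝ) : dot3 (t • x) y = t * dot3 x y := by
  simp [dot3]; ring

lemma dot3_cross_smul_left (x : Fin 3 → ℝ) (t : ℝ) (y z : Fin 3 → ℝ) :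
    dot3 x (crossProduct (t • y) z) = t * dot3 x (crossProduct y z) := by
  simp [cross_apply, dot3]; ring

lemma dot3_neg_right (x y : Fin 3 → ℝ) : dot3 x (-y) = -dot3 x y := by
  simp [dot3]; ring

lemma det_re_eval (x1 y1 x2 y2 n : Fin 3 → ℝ) :
    (detForm3 ![toC (x1, y1), toC (x2, y2), toC (0, n)]).re
      = -(dot3 y1 (crossProduct x2 n)) - dot3 x1 (crossProduct y2 n) := by
  simp [detForm3, toC, Matrix.det_fin_three, dot3, cross_apply, Complex.add_re, Complex.mul_re,
    Complex.add_im, Complex.mul_im]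
  ring

variable {F : Type*} [NormedAddCommGroup F] [NormedSpace ℝ F]

lemma sliceu_hasDerivAt {g : ℝ × ℝ → F} {q : ℝ × ℝ} (h : DifferentiableAt ℝ g q) :
    HasDerivAt (fun s => g (s, q.2)) (fderiv ℝ g q (1, 0)) q.1 := by
  have hl : HasDerivAt (fun s : ℝ => (s, q.2)) ((1 : ℝ), (0 : ℝ)) q.1 :=
    (hasDerivAt_id q.1).prodMk (hasDerivAt_const q.1 q.2)
  exact h.hasFDerivAt.comp_hasDerivAt q.1 hl

lemma slicev_hasDerivAt {g : ℝ × ℝ → F} {q : ℝ × ℝ} (h : DifferentiableAt ℝ g q) :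
    HasDerivAt (fun s => g (q.1, s)) (fderiv ℝ g q (0, 1)) q.2 := by
  have hl : HasDerivAt (fun s : ℝ => (q.1, s)) ((0 : ℝ), (1 : ℝ)) q.2 :=
    (hasDerivAt_const q.2 q.1).prodMk (hasDerivAt_id q.2)
  exact h.hasFDerivAt.comp_hasDerivAt q.2 hl

end auxlemmas

/-- Harvey–Lawson, surface case: the normal bundle of a minimal surface in `ℝ³` is
special Lagrangian in `ℂ³` with phase `i`. -/
theorem stmt8 (U : Set (ℝ × ℝ)) (hU : IsOpen U) (r : ℝ × ℝ → Fin 3 → ℝ)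
    (hsmooth : ContDiffOn ℝ (⊤ : ℕ∞) r U)
    (hharm : ∀ p ∈ U, Du (Du r) p + Dv (Dv r) p = 0)
    (hconf : ∀ p ∈ U, dot3 (Du r p) (Dv r p) = 0)
    (hiso : ∀ p ∈ U, norm3 (Du r p) = norm3 (Dv r p))
    (hreg : ∀ p ∈ U, norm3 (Du r p) ≠ 0) :
    ∀ p ∈ U, ∀ t : ℝ,
      (∀ X ∈ ({nbu r p t, nbv r p t, nbt r p t} : Set ((Fin 3 → ℝ) × (Fin 3 → ℝ))),
        ∀ Y ∈ ({nbu r p t, nbv r p t, nbt r p t} : Set ((Fin 3 → ℝ) × (Fin 3 → ℝ))),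
          symp X Y = 0) ∧
      (detForm3 ![toC (nbu r p t), toC (nbv r p t), toC (nbt r p t)]).re = 0 := by
  intro p hp t
  -- componentwise smoothness
  have hfC : ∀ (i : Fin 3), ∀ q ∈ U, ContDiffAt ℝ (⊤ : ℕ∞) (fun q => r q i) q := by
    intro i q hq
    have h1 : ContDiffAt ℝ (⊤ : ℕ∞) r q := hsmooth.contDiffAt (hU.mem_nhds hq)
    exact ((ContinuousLinearMap.proj (R := ℝ) (φ := fun _ : Fin 3 => ℝ) i).contDiff.contDiffAt).comp q h1
  set A : ℝ × ℝ → Fin 3 → ℝ := fun q i => fderiv ℝ (fun x => r x i) q (1, 0) with hA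
  set B : ℝ × ℝ → Fin 3 → ℝ := fun q i => fderiv ℝ (fun x => r x i) q (0, 1) with hB
  have hDuA : ∀ q ∈ U, Du r q = A q := by
    intro q hq; funext i
    exact (sliceu_hasDerivAt ((hfC i q hq).differentiableAt (by simp))).deriv
  have hDvB : ∀ q ∈ U, Dv r q = B q := by
    intro q hq; funext i
    exact (slicev_hasDerivAt ((hfC i q hq).differentiableAt (by simp))).deriv
  have hAC : ∀ (i : Fin 3), ∀ q ∈ U, ContDiffAt ℝ (⊤ : ℕ∞) (fun q => A q i) q := by
    intro i q hq
    exact ((ContinuousLinearMap.apply ℝ ℝ ((1:ℝ), (0:ℝ))).contDiff.contDiffAt).comp q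
      ((hfC i q hq).fderiv_right (by simp))
  have hBC : ∀ (i : Fin 3), ∀ q ∈ U, ContDiffAt ℝ (⊤ : ℕ∞) (fun q => B q i) q := by
    intro i q hq
    exact ((ContinuousLinearMap.apply ℝ ℝ ((0:ℝ), (1:ℝ))).contDiff.contDiffAt).comp q
      ((hfC i q hq).fderiv_right (by simp))
  -- positivity facts
  have hdpos : ∀ q ∈ U, 0 < dot3 (Du r q) (Du r q) := by
    intro q hq
    rw [dot3_self_eq_sq]
    have := hreg q hq
    positivity
  have hCval : ∀ q ∈ U,
      dot3 (crossProduct (A q) (B q)) (crossProduct (A q) (B q))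
        = dot3 (Du r q) (Du r q) ^ 2 := by
    intro q hq
    rw [← hDuA q hq, ← hDvB q hq, lagrange3, hconf q hq, dot3_self_eq_sq (Du r q),
      dot3_self_eq_sq (Dv r q), hiso q hq]
    ring
  have hCpos : ∀ q ∈ U,
      0 < dot3 (crossProduct (A q) (B q)) (crossProduct (A q) (B q)) := by
    intro q hq; rw [hCval q hq]; exact pow_pos (hdpos q hq) 2
  -- smooth version N of nvec
  set N : ℝ × ℝ → Fin 3 → ℝ := fun q =>
    (Real.sqrt (dot3 (crossProduct (A q) (B q)) (crossProduct (A q) (B q))))⁻¹ •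
      crossProduct (A q) (B q) with hN
  have hnvecN : ∀ q ∈ U, nvec r q = N q := by
    intro q hq
    rw [nvec, norm3, hDuA q hq, hDvB q hq]
  have hCrC : ∀ (i : Fin 3), ∀ q ∈ U,
      ContDiffAt ℝ (⊤ : ℕ∞) (fun q => crossProduct (A q) (B q) i) q := by
    intro i q hq
    fin_cases i
    · exact (((hAC 1 q hq).mul (hBC 2 q hq)).sub
        ((hAC 2 q hq).mul (hBC 1 q hq))).congr_of_eventuallyEq
        (Filter.Eventually.of_forall fun q' => by simp [cross_apply])
    · exact (((hAC 2 q hq).mul (hBC 0 q hq)).sub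
        ((hAC 0 q hq).mul (hBC 2 q hq))).congr_of_eventuallyEq
        (Filter.Eventually.of_forall fun q' => by simp [cross_apply])
    · exact (((hAC 0 q hq).mul (hBC 1 q hq)).sub
        ((hAC 1 q hq).mul (hBC 0 q hq))).congr_of_eventuallyEq
        (Filter.Eventually.of_forall fun q' => by simp [cross_apply])
  have hdotC : ∀ q ∈ U, ContDiffAt ℝ (⊤ : ℕ∞)
      (fun q => dot3 (crossProduct (A q) (B q)) (crossProduct (A q) (B q))) q := by
    intro q hq
    simp only [dot3]
    exact (((hCrC 0 q hq).mul (hCrC 0 q hq)).add ((hCrC 1 q hq).mul (hCrC 1 q hq))).add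
      ((hCrC 2 q hq).mul (hCrC 2 q hq))
  have hNC : ∀ (i : Fin 3), ∀ q ∈ U, ContDiffAt ℝ (⊤ : ℕ∞) (fun q => N q i) q := by
    intro i q hq
    have hsqrt : ContDiffAt ℝ (⊤ : ℕ∞)
        (fun q => Real.sqrt (dot3 (crossProduct (A q) (B q)) (crossProduct (A q) (B q)))) q :=
      (Real.contDiffAt_sqrt (hCpos q hq).ne').comp q (hdotC q hq)
    have hne : Real.sqrt (dot3 (crossProduct (A q) (B q)) (crossProduct (A q) (B q))) ≠ 0 :=
      (Real.sqrt_pos.mpr (hCpos q hq)).ne'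
    have heq : (fun q => N q i) = fun q =>
        (Real.sqrt (dot3 (crossProduct (A q) (B q)) (crossProduct (A q) (B q))))⁻¹ *
          crossProduct (A q) (B q) i := by
      funext q; simp [hN]
    rw [heq]
    exact (hsqrt.inv hne).mul (hCrC i q hq)
  -- neighborhood membership along slices
  have hmemu : ∀ᶠ s in nhds p.1, (s, p.2) ∈ U := by
    have hc : ContinuousAt (fun s : ℝ => (s, p.2)) p.1 :=
      (continuous_id.prodMk continuous_const).continuousAt
    exact hc.preimage_mem_nhds (hU.mem_nhds hp)
  have hmemv : ∀ᶠ s in nhds p.2, (p.1, s) ∈ U := by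
    have hc : ContinuousAt (fun s : ℝ => (p.1, s)) p.2 :=
      (continuous_const.prodMk continuous_id).continuousAt
    exact hc.preimage_mem_nhds (hU.mem_nhds hp)
  -- slice differentiability via the smooth models
  have hsliceu : ∀ (g G : ℝ × ℝ → Fin 3 → ℝ), (∀ q ∈ U, g q = G q) →
      (∀ i, ∀ q ∈ U, ContDiffAt ℝ (⊤ : ℕ∞) (fun q => G q i) q) →
      ∀ i, DifferentiableAt ℝ (fun s => g (s, p.2) i) p.1 := by
    intro g G hgG hGC i
    have hev : (fun s => g (s, p.2) i) =ᶠ[nhds p.1] (fun s => G (s, p.2) i) := by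
      filter_upwards [hmemu] with s hs
      rw [hgG _ hs]
    rw [hev.differentiableAt_iff]
    exact ((hGC i p hp).differentiableAt (by simp)).comp p.1
      (show DifferentiableAt ℝ (fun s : ℝ => (s, p.2)) p.1 from
        differentiableAt_id.prodMk (differentiableAt_const _))
  have hslicev : ∀ (g G : ℝ × ℝ → Fin 3 → ℝ), (∀ q ∈ U, g q = G q) →
      (∀ i, ∀ q ∈ U, ContDiffAt ℝ (⊤ : ℕ∞) (fun q => G q i) q) →
      ∀ i, DifferentiableAt ℝ (fun s => g (p.1, s) i) p.2 := by
    intro g G hgG hGC i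
    have hev : (fun s => g (p.1, s) i) =ᶠ[nhds p.2] (fun s => G (p.1, s) i) := by
      filter_upwards [hmemv] with s hs
      rw [hgG _ hs]
    rw [hev.differentiableAt_iff]
    exact ((hGC i p hp).differentiableAt (by simp)).comp p.2
      (show DifferentiableAt ℝ (fun s : ℝ => (p.1, s)) p.2 from
        (differentiableAt_const _).prodMk differentiableAt_id)
  have hdiff_au := hsliceu (Du r) A hDuA hAC
  have hdiff_bu := hsliceu (Dv r) B hDvB hBC
  have hdiff_nu := hsliceu (nvec r) N hnvecN hNC
  have hdiff_av := hslicev (Du r) A hDuA hAC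
  have hdiff_bv := hslicev (Dv r) B hDvB hBC
  have hdiff_nv := hslicev (nvec r) N hnvecN hNC
  -- product-rule identities
  have hDgen_u : ∀ (g : ℝ × ℝ → Fin 3 → ℝ),
      (∀ i, DifferentiableAt ℝ (fun s => g (s, p.2) i) p.1) →
      (∀ q, dot3 (g q) (nvec r q) = 0) →
      dot3 (fun i => deriv (fun s => g (s, p.2) i) p.1) (nvec r p)
        + dot3 (g p) (fun i => deriv (fun s => nvec r (s, p.2) i) p.1) = 0 := by
    intro g hdg hzero
    have h0 := (hdg 0).hasDerivAt.mul (hdiff_nu 0).hasDerivAt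
    have h1 := (hdg 1).hasDerivAt.mul (hdiff_nu 1).hasDerivAt
    have h2 := (hdg 2).hasDerivAt.mul (hdiff_nu 2).hasDerivAt
    have hsum : HasDerivAt (fun s => g (s, p.2) 0 * nvec r (s, p.2) 0 + g (s, p.2) 1 * nvec r (s, p.2) 1
        + g (s, p.2) 2 * nvec r (s, p.2) 2) _ p.1 := (h0.add h1).add h2
    have hfun : (fun s => g (s, p.2) 0 * nvec r (s, p.2) 0 + g (s, p.2) 1 * nvec r (s, p.2) 1
        + g (s, p.2) 2 * nvec r (s, p.2) 2) = fun _ => (0 : ℝ) := by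
      funext s
      simpa [dot3] using hzero (s, p.2)
    rw [hfun] at hsum
    have h := hsum.unique (hasDerivAt_const p.1 0)
    simp only [Prod.mk.eta] at h
    simp only [dot3]
    linear_combination h
  have hDgen_v : ∀ (g : ℝ × ℝ → Fin 3 → ℝ),
      (∀ i, DifferentiableAt ℝ (fun s => g (p.1, s) i) p.2) →
      (∀ q, dot3 (g q) (nvec r q) = 0) →
      dot3 (fun i => deriv (fun s => g (p.1, s) i) p.2) (nvec r p)
        + dot3 (g p) (fun i => deriv (fun s => nvec r (p.1, s) i) p.2) = 0 := by
    intro g hdg hzero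
    have h0 := (hdg 0).hasDerivAt.mul (hdiff_nv 0).hasDerivAt
    have h1 := (hdg 1).hasDerivAt.mul (hdiff_nv 1).hasDerivAt
    have h2 := (hdg 2).hasDerivAt.mul (hdiff_nv 2).hasDerivAt
    have hsum : HasDerivAt (fun s => g (p.1, s) 0 * nvec r (p.1, s) 0 + g (p.1, s) 1 * nvec r (p.1, s) 1
        + g (p.1, s) 2 * nvec r (p.1, s) 2) _ p.2 := (h0.add h1).add h2
    have hfun : (fun s => g (p.1, s) 0 * nvec r (p.1, s) 0 + g (p.1, s) 1 * nvec r (p.1, s) 1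
        + g (p.1, s) 2 * nvec r (p.1, s) 2) = fun _ => (0 : ℝ) := by
      funext s
      simpa [dot3] using hzero (p.1, s)
    rw [hfun] at hsum
    have h := hsum.unique (hasDerivAt_const p.2 0)
    simp only [Prod.mk.eta] at h
    simp only [dot3]
    linear_combination h
  have hD1 := hDgen_u (Du r) hdiff_au (dot3_du_nvec r)
  have hD2 := hDgen_u (Dv r) hdiff_bu (dot3_dv_nvec r)
  have hD3 := hDgen_v (Du r) hdiff_av (dot3_du_nvec r)
  have hD4 := hDgen_v (Dv r) hdiff_bv (dot3_dv_nvec r)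
  -- Clairaut
  have hclair : ∀ i : Fin 3, deriv (fun s => Dv r (s, p.2) i) p.1
      = deriv (fun s => Du r (p.1, s) i) p.2 := by
    intro i
    have hf2 : DifferentiableAt ℝ (fderiv ℝ (fun x => r x i)) p :=
      ((hfC i p hp).fderiv_right (m := 1) (by exact WithTop.coe_le_coe.mpr le_top)).differentiableAt one_ne_zero
    have hsymm : IsSymmSndFDerivAt ℝ (fun x => r x i) p :=
      (hfC i p hp).isSymmSndFDerivAt (by rw [minSmoothness_of_isRCLikeNormedField]; exact WithTop.coe_le_coe.mpr le_top)
    have hevl : (fun s => Dv r (s, p.2) i) =ᶠ[nhds p.1] (fun s => B (s, p.2) i) := by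
      filter_upwards [hmemu] with s hs
      rw [hDvB _ hs]
    have hevr : (fun s => Du r (p.1, s) i) =ᶠ[nhds p.2] (fun s => A (p.1, s) i) := by
      filter_upwards [hmemv] with s hs
      rw [hDuA _ hs]
    have hl1 : HasDerivAt (fun s => fderiv ℝ (fun x => r x i) (s, p.2))
        (fderiv ℝ (fderiv ℝ (fun x => r x i)) p (1, 0)) p.1 := sliceu_hasDerivAt hf2
    have hl2 : HasDerivAt (fun s => B (s, p.2) i)
        (fderiv ℝ (fderiv ℝ (fun x => r x i)) p (1, 0) (0, 1)) p.1 :=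
      (ContinuousLinearMap.apply ℝ ℝ ((0:ℝ), (1:ℝ))).hasFDerivAt.comp_hasDerivAt p.1 hl1
    have hr1 : HasDerivAt (fun s => fderiv ℝ (fun x => r x i) (p.1, s))
        (fderiv ℝ (fderiv ℝ (fun x => r x i)) p (0, 1)) p.2 := slicev_hasDerivAt hf2
    have hr2 : HasDerivAt (fun s => A (p.1, s) i)
        (fderiv ℝ (fderiv ℝ (fun x => r x i)) p (0, 1) (1, 0)) p.2 :=
      (ContinuousLinearMap.apply ℝ ℝ ((1:ℝ), (0:ℝ))).hasFDerivAt.comp_hasDerivAt p.2 hr1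
    rw [hevl.deriv_eq, hevr.deriv_eq, hl2.deriv, hr2.deriv]
    exact hsymm (1, 0) (0, 1)
  -- harmonicity, componentwise in deriv form
  have hharm' : ∀ i : Fin 3, deriv (fun s => Du r (s, p.2) i) p.1
      + deriv (fun s => Dv r (p.1, s) i) p.2 = 0 := by
    intro i
    have h := congrFun (hharm p hp) i
    simpa [Du, Dv] using h
  -- components of the tangent vectors
  have hnbu1 : ∀ i, (nbu r p t).1 i = Du r p i := fun i => rfl
  have hnbv1 : ∀ i, (nbv r p t).1 i = Dv r p i := fun i => rfl
  have hnbu2 : ∀ i, (nbu r p t).2 i = t * deriv (fun s => nvec r (s, p.2) i) p.1 := by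
    intro i
    show deriv (fun s => (t • nvec r (s, p.2)) i) p.1 = _
    simp only [Pi.smul_apply, smul_eq_mul]
    exact deriv_const_mul_field t
  have hnbv2 : ∀ i, (nbv r p t).2 i = t * deriv (fun s => nvec r (p.1, s) i) p.2 := by
    intro i
    show deriv (fun s => (t • nvec r (p.1, s)) i) p.2 = _
    simp only [Pi.smul_apply, smul_eq_mul]
    exact deriv_const_mul_field t
  have hnbt1 : ∀ i, (nbt r p t).1 i = 0 := fun i => deriv_const _ _
  have hnbt2 : ∀ i, (nbt r p t).2 i = nvec r p i := by
    intro i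
    show deriv (fun s => (s • nvec r p) i) t = _
    simp only [Pi.smul_apply, smul_eq_mul]
    exact (hasDerivAt_mul_const (nvec r p i)).deriv
  -- the three basic symplectic evaluations
  have s_uv : symp (nbu r p t) (nbv r p t) = 0 := by
    have h2 := hD2; have h3 := hD3
    simp only [dot3] at h2 h3
    simp only [symp, dot3, hnbu1, hnbu2, hnbv1, hnbv2]
    linear_combination t * h3 - t * h2 + t * nvec r p 0 * hclair 0
      + t * nvec r p 1 * hclair 1 + t * nvec r p 2 * hclair 2
  have s_ut : symp (nbu r p t) (nbt r p t) = 0 := by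
    have h := dot3_du_nvec r p
    simp only [dot3] at h
    simp only [symp, dot3, hnbu1, hnbu2, hnbt1, hnbt2]
    linear_combination h
  have s_vt : symp (nbv r p t) (nbt r p t) = 0 := by
    have h := dot3_dv_nvec r p
    simp only [dot3] at h
    simp only [symp, dot3, hnbv1, hnbv2, hnbt1, hnbt2]
    linear_combination h
  have anti : ∀ Z W : (Fin 3 → ℝ) × (Fin 3 → ℝ), symp Z W = -symp W Z := by
    intro Z W
    simp only [symp, dot3]
    ring
  constructor
  · intro X hX Y hY
    simp only [Set.mem_insert_iff, Set.mem_singleton_iff] at hX hY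
    rcases hX with rfl | rfl | rfl <;> rcases hY with rfl | rfl | rfl
    · exact sub_self _
    · exact s_uv
    · exact s_ut
    · rw [anti, s_uv, neg_zero]
    · exact sub_self _
    · exact s_vt
    · rw [anti, s_ut, neg_zero]
    · rw [anti, s_vt, neg_zero]
    · exact sub_self _
  -- the special Lagrangian condition
  · -- algebraic facts at p
    have hd : dot3 (Du r p) (Du r p) ≠ 0 := (hdpos p hp).ne'
    have hcc : dot3 (crossProduct (Du r p) (Dv r p)) (crossProduct (Du r p) (Dv r p))
        = dot3 (Du r p) (Du r p) ^ 2 := by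
      rw [lagrange3, hconf p hp, dot3_self_eq_sq (Du r p), dot3_self_eq_sq (Dv r p), hiso p hp]
      ring
    have hnorm : norm3 (crossProduct (Du r p) (Dv r p)) = dot3 (Du r p) (Du r p) := by
      rw [norm3, hcc, Real.sqrt_sq (hdpos p hp).le]
    have hnv : nvec r p = (dot3 (Du r p) (Du r p))⁻¹ • crossProduct (Du r p) (Dv r p) := by
      rw [nvec, hnorm]
    have h1 := hconf p hp
    have h2 : dot3 (Dv r p) (Dv r p) = dot3 (Du r p) (Du r p) := by
      rw [dot3_self_eq_sq, dot3_self_eq_sq, hiso p hp]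
    have h3 : (dot3 (Du r p) (Du r p))⁻¹ * dot3 (Du r p) (Du r p) = 1 := inv_mul_cancel₀ hd
    simp only [dot3] at h1 h2 h3
    have hbn : crossProduct (Dv r p) (nvec r p) = Du r p := by
      funext i
      rw [hnv]
      fin_cases i <;>
        simp only [dot3, cross_apply, Pi.smul_apply, smul_eq_mul, Fin.zero_eta, fin3_mk_two, Fin.mk_one,
           Fin.isValue, Matrix.cons_val_zero, Matrix.cons_val_one, Matrix.head_cons,
          Matrix.cons_val_two, Matrix.tail_cons]
      · linear_combination ((Du r p 0 * Du r p 0 + Du r p 1 * Du r p 1 + Du r p 2 * Du r p 2)⁻¹ * Du r p 0) * h2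
          - ((Du r p 0 * Du r p 0 + Du r p 1 * Du r p 1 + Du r p 2 * Du r p 2)⁻¹ * Dv r p 0) * h1 + (Du r p 0) * h3
      · linear_combination ((Du r p 0 * Du r p 0 + Du r p 1 * Du r p 1 + Du r p 2 * Du r p 2)⁻¹ * Du r p 1) * h2
          - ((Du r p 0 * Du r p 0 + Du r p 1 * Du r p 1 + Du r p 2 * Du r p 2)⁻¹ * Dv r p 1) * h1 + (Du r p 1) * h3
      · linear_combination ((Du r p 0 * Du r p 0 + Du r p 1 * Du r p 1 + Du r p 2 * Du r p 2)⁻¹ * Du r p 2) * h2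
          - ((Du r p 0 * Du r p 0 + Du r p 1 * Du r p 1 + Du r p 2 * Du r p 2)⁻¹ * Dv r p 2) * h1 + (Du r p 2) * h3
    have han : crossProduct (Du r p) (nvec r p) = -Dv r p := by
      funext i
      rw [hnv]
      fin_cases i <;>
        simp only [dot3, cross_apply, Pi.smul_apply, Pi.neg_apply, smul_eq_mul, Fin.zero_eta, fin3_mk_two,
          Fin.mk_one,  Fin.isValue, Matrix.cons_val_zero, Matrix.cons_val_one,
          Matrix.head_cons, Matrix.cons_val_two, Matrix.tail_cons]
      · linear_combination ((Du r p 0 * Du r p 0 + Du r p 1 * Du r p 1 + Du r p 2 * Du r p 2)⁻¹ * Du r p 0) * h1 - (Dv r p 0) * h3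
      · linear_combination ((Du r p 0 * Du r p 0 + Du r p 1 * Du r p 1 + Du r p 2 * Du r p 2)⁻¹ * Du r p 1) * h1 - (Dv r p 1) * h3
      · linear_combination ((Du r p 0 * Du r p 0 + Du r p 1 * Du r p 1 + Du r p 2 * Du r p 2)⁻¹ * Du r p 2) * h1 - (Dv r p 2) * h3
    -- rewrite the tangent vectors as explicit pairs
    have e1 : nbu r p t = (Du r p, t • fun i => deriv (fun s => nvec r (s, p.2) i) p.1) := by
      apply Prod.ext
      · funext i; exact hnbu1 i
      · funext i
        rw [hnbu2 i]
        simp [Pi.smul_apply, smul_eq_mul]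
    have e2 : nbv r p t = (Dv r p, t • fun i => deriv (fun s => nvec r (p.1, s) i) p.2) := by
      apply Prod.ext
      · funext i; exact hnbv1 i
      · funext i
        rw [hnbv2 i]
        simp [Pi.smul_apply, smul_eq_mul]
    have e3 : nbt r p t = (0, nvec r p) := by
      apply Prod.ext
      · funext i; exact hnbt1 i
      · funext i; exact hnbt2 i
    rw [e1, e2, e3, det_re_eval, dot3_smul_left3, dot3_cross_smul_left, hbn,
      dot3_cross_cyclic (Du r p), ← cross_anticomm, dot3_neg_right, han, dot3_neg_right]
    -- now goal: -(t * dot3 nu (Du r p)) - t * --(dot3 nv (Dv r p)) = 0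
    have hk1 := hD1; have hk4 := hD4
    simp only [dot3] at hk1 hk4 ⊢
    linear_combination (-t) * hk1 + (-t) * hk4 + (t * nvec r p 0) * hharm' 0
      + (t * nvec r p 1) * hharm' 1 + (t * nvec r p 2) * hharm' 2
end
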